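/- Let G be a subgroup of GL(2,ℝ). Suppose B₁ and B₂ are two linearly independent nondegenerate symmetric bilinear forms on ℝ² that are both preserved by every element of G (i.e. Bᵢ(g·v, g·w) = Bᵢ(v,w) for all g ∈ G, v,w ∈ ℝ², i = 1,2). Then G acts reducibly on ℝ², i.e. there exists a G-invariant linear subspace W of ℝ² with W ≠ 0 and W ≠ ℝ². -/

import Mathlib

/-!
Let `T` be the endomorphism defined by `B₂ v w = B₁ (T v) w`. It is `B₁`-self-adjoint, it is not
a scalar because the forms are independent, and it commutes with every `g ∈ G` because `g`
preserves both forms. If `T` has a real eigenvalue, its eigenspace is a `G`-invariant line.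
Otherwise every `v ≠ 0` is a cyclic vector for `T`, so each `g ∈ G` is of the form `a + b T`.
Such a `g` is `B₁`-self-adjoint as well as `B₁`-orthogonal, hence `g² = 1`, so `g` has an
eigenvector; if `b ≠ 0` it would be an eigenvector of `T`. Hence `G` consists of scalars and
every line is invariant.
-/

open Module LinearMap

def ActsReducibly {R V : Type*} [Semiring R] [AddCommMonoid V] [Module R V]
    (S : Set (Module.End R V)) : Prop :=
  ∃ W : Submodule R V, W ≠ ⊥ ∧ W ≠ ⊤ ∧ ∀ g ∈ S, ∀ v ∈ W, g v ∈ W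

section CommRing

variable {R M : Type*} [CommRing R] [AddCommGroup M] [Module R M]

theorem LinearMap.IsOrthogonal.injective {B : LinearMap.BilinForm R M} {g : End R M}
    (hB : B.SeparatingLeft) (hg : B.IsOrthogonal g) : Function.Injective g :=
  (injective_iff_map_eq_zero g).2 fun v hv ↦ hB v fun w ↦ by
    rw [← hg v w, hv, map_zero, zero_apply]

theorem LinearMap.IsOrthogonal.mul_self_eq_one {B : LinearMap.BilinForm R M} {g : End R M}
    (hg : B.IsOrthogonal g) (hB : B.SeparatingLeft) (hsa : B.IsSelfAdjoint g) : g * g = 1 := by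
  ext x
  refine sub_eq_zero.1 (hB _ fun y ↦ ?_)
  rw [map_sub, LinearMap.sub_apply, Module.End.mul_apply, hsa, hg, Module.End.one_apply,
    sub_self]

theorem Module.End.exists_hasEigenvalue_of_mul_self_eq_one [Nontrivial M] {g : End R M}
    (hg : g * g = 1) : ∃ μ, g.HasEigenvalue μ := by
  obtain ⟨u, hu⟩ := exists_ne (0 : M)
  by_cases h : g u + u = 0
  · refine ⟨-1, hasEigenvalue_of_hasEigenvector (x := u) ⟨mem_eigenspace_iff.2 ?_, hu⟩⟩
    rw [neg_one_smul, eq_neg_iff_add_eq_zero, h]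
  · refine ⟨1, hasEigenvalue_of_hasEigenvector (x := g u + u) ⟨mem_eigenspace_iff.2 ?_, h⟩⟩
    rw [one_smul, map_add, ← Module.End.mul_apply, hg, one_apply, add_comm]

theorem Module.End.exists_eq_smul_one_add_smul_of_commute {T g : End R M} {v : M}
    (hspan : Submodule.span R {T v, v} = ⊤) (hg : Commute g T) :
    ∃ a b : R, g = a • 1 + b • T := by
  obtain ⟨b, a, hab⟩ := Submodule.mem_span_pair.1 (hspan ▸ Submodule.mem_top : g v ∈ _)
  refine ⟨a, b, ext_on hspan ?_⟩
  rintro x (rfl | rfl)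
  · rw [← Module.End.mul_apply, hg.eq, Module.End.mul_apply, ← hab]
    simp [add_comm]
  · simpa [add_comm] using hab.symm

theorem actsReducibly_of_commute_of_hasEigenvalue {T : End R M} {μ : R}
    (hμ : T.HasEigenvalue μ) (hT : T ≠ μ • 1) {S : Set (End R M)}
    (hS : ∀ g ∈ S, Commute g T) : ActsReducibly S := by
  refine ⟨T.eigenspace μ, hμ, fun htop ↦ hT ?_, fun g hg v hv ↦ ?_⟩
  · ext v
    simpa using Module.End.mem_eigenspace_iff.1 (htop ▸ Submodule.mem_top : v ∈ T.eigenspace μ)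
  · rw [Module.End.mem_eigenspace_iff] at hv ⊢
    rw [← Module.End.mul_apply, ← (hS g hg).eq, Module.End.mul_apply, hv, map_smul]

end CommRing

section Field

variable {K V : Type*} [Field K] [AddCommGroup V] [Module K V]

namespace LinearMap.BilinForm

variable [FiniteDimensional K V] {B₁ B₂ : LinearMap.BilinForm K V} (hB₁ : B₁.Nondegenerate)

theorem isSelfAdjoint_symmCompOfNondegenerate (hs₁ : B₁.IsSymm) (hs₂ : B₂.IsSymm) :
    B₁.IsSelfAdjoint (B₂.symmCompOfNondegenerate B₁ hB₁) := fun x y ↦ by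
  rw [symmCompOfNondegenerate_left_apply, hs₂.eq, ← symmCompOfNondegenerate_left_apply B₂ hB₁,
    hs₁.eq]

theorem commute_symmCompOfNondegenerate {g : End K V} (h₁ : B₁.IsOrthogonal g)
    (h₂ : B₂.IsOrthogonal g) : Commute (B₂.symmCompOfNondegenerate B₁ hB₁) g := by
  have hg : Function.Surjective g := injective_iff_surjective.1 (h₁.injective hB₁.1)
  ext v
  refine sub_eq_zero.1 (hB₁.1 _ fun y ↦ ?_)
  obtain ⟨w, rfl⟩ := hg y
  rw [Module.End.mul_apply, Module.End.mul_apply, map_sub, LinearMap.sub_apply, h₁,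
    symmCompOfNondegenerate_left_apply, symmCompOfNondegenerate_left_apply, h₂, sub_self]

theorem symmCompOfNondegenerate_ne_smul_one (hind : LinearIndependent K ![B₁, B₂]) (c : K) :
    B₂.symmCompOfNondegenerate B₁ hB₁ ≠ c • 1 := by
  intro hT
  have h₂ : ∀ v w, B₂ v w = c * B₁ v w := fun v w ↦ by
    rw [← symmCompOfNondegenerate_left_apply B₂ hB₁, hT]
    simp
  have := (LinearIndependent.pair_iff (M := LinearMap.BilinForm K V)).1 hind c (-1)
    (by ext v w; simp [h₂])
  norm_num at this

end LinearMap.BilinForm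

theorem actsReducibly_of_forall_eq_smul_one (hV : 1 < finrank K V) {S : Set (End K V)}
    (hS : ∀ g ∈ S, ∃ a : K, g = a • 1) : ActsReducibly S := by
  have : Nontrivial V := Module.nontrivial_of_finrank_pos (one_pos.trans hV)
  obtain ⟨v, hv⟩ := exists_ne (0 : V)
  refine ⟨K ∙ v, (Submodule.span_singleton_eq_bot.not).2 hv, fun htop ↦ ?_, fun g hg w hw ↦ ?_⟩
  · have := finrank_span_singleton (K := K) hv
    rw [htop, finrank_top] at this
    omega
  · obtain ⟨a, rfl⟩ := hS g hg
    simpa using Submodule.smul_mem _ a hw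

theorem Module.End.span_pair_eq_top_of_forall_not_hasEigenvalue (hV : finrank K V = 2)
    {T : End K V} (hT : ∀ μ, ¬ T.HasEigenvalue μ) {v : V} (hv : v ≠ 0) :
    Submodule.span K {T v, v} = ⊤ := by
  have hli : LinearIndependent K ![v, T v] := (LinearIndependent.pair_iff' hv).2 fun a ha ↦
    hT a (hasEigenvalue_of_hasEigenvector ⟨mem_eigenspace_iff.2 ha.symm, hv⟩)
  simpa [Matrix.range_cons_cons_empty] using hli.span_eq_top_of_card_eq_finrank (by simp [hV])

theorem exists_eq_smul_one_of_isOrthogonal_of_commute (hV : finrank K V = 2)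
    {B : LinearMap.BilinForm K V} (hB : B.SeparatingLeft) {T g : End K V}
    (hT : B.IsSelfAdjoint T) (hTμ : ∀ μ, ¬ T.HasEigenvalue μ) (hgT : Commute g T)
    (hg : B.IsOrthogonal g) : ∃ a : K, g = a • 1 := by
  have : Nontrivial V := Module.nontrivial_of_finrank_eq_succ hV
  obtain ⟨v, hv⟩ := exists_ne (0 : V)
  obtain ⟨a, b, rfl⟩ := Module.End.exists_eq_smul_one_add_smul_of_commute
    (Module.End.span_pair_eq_top_of_forall_not_hasEigenvalue hV hTμ hv) hgT
  have hsa : B.IsSelfAdjoint ⇑(a • 1 + b • T) := fun x y ↦ by simp [hT x y]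
  obtain ⟨μ, hμ⟩ := Module.End.exists_hasEigenvalue_of_mul_self_eq_one (hg.mul_self_eq_one hB hsa)
  obtain ⟨w, hw⟩ := hμ.exists_hasEigenvector
  have hb : b = 0 := by
    by_contra hb
    refine hTμ (b⁻¹ * (μ - a)) (Module.End.hasEigenvalue_of_hasEigenvector
      ⟨Module.End.mem_eigenspace_iff.2 ?_, hw.2⟩)
    have hμw := hw.apply_eq_smul
    simp only [LinearMap.add_apply, LinearMap.smul_apply, Module.End.one_apply] at hμw
    rw [mul_smul, sub_smul, ← hμw, add_sub_cancel_left, smul_smul, inv_mul_cancel₀ hb, one_smul]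
  exact ⟨a, by simp [hb]⟩

theorem actsReducibly_of_isOrthogonal_two_forms [FiniteDimensional K V] (hV : finrank K V = 2)
    {B₁ B₂ : LinearMap.BilinForm K V} (hs₁ : B₁.IsSymm) (hs₂ : B₂.IsSymm)
    (hnd : B₁.Nondegenerate) (hind : LinearIndependent K ![B₁, B₂]) {S : Set (End K V)}
    (hS : ∀ g ∈ S, B₁.IsOrthogonal g ∧ B₂.IsOrthogonal g) : ActsReducibly S := by
  set T : End K V := B₂.symmCompOfNondegenerate B₁ hnd
  have hcomm : ∀ g ∈ S, Commute g T := fun g hg ↦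
    (BilinForm.commute_symmCompOfNondegenerate hnd (hS g hg).1 (hS g hg).2).symm
  by_cases hT : ∃ μ, T.HasEigenvalue μ
  · obtain ⟨μ, hμ⟩ := hT
    exact actsReducibly_of_commute_of_hasEigenvalue hμ
      (BilinForm.symmCompOfNondegenerate_ne_smul_one hnd hind μ) hcomm
  · simp only [not_exists] at hT
    exact actsReducibly_of_forall_eq_smul_one (hV ▸ one_lt_two) fun g hg ↦
      exists_eq_smul_one_of_isOrthogonal_of_commute hV hnd.1
        (BilinForm.isSelfAdjoint_symmCompOfNondegenerate hnd hs₁ hs₂) hT (hcomm g hg) (hS g hg).1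

end Field

theorem reducible_of_two_forms_dim_two_general
    (G : Subgroup (GL (Fin 2) ℝ))
    (B₁ B₂ : LinearMap.BilinForm ℝ (Fin 2 → ℝ))
    (hsymm₁ : ∀ v w, B₁ v w = B₁ w v)
    (hsymm₂ : ∀ v w, B₂ v w = B₂ w v)
    (hnd₁ : ∀ v, (∀ w, B₁ v w = 0) → v = 0)
    (hind : LinearIndependent ℝ ![B₁, B₂])
    (hinv₁ : ∀ g ∈ G, ∀ v w : Fin 2 → ℝ,
      B₁ ((g : Matrix (Fin 2) (Fin 2) ℝ).mulVec v)
         ((g : Matrix (Fin 2) (Fin 2) ℝ).mulVec w) = B₁ v w)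
    (hinv₂ : ∀ g ∈ G, ∀ v w : Fin 2 → ℝ,
      B₂ ((g : Matrix (Fin 2) (Fin 2) ℝ).mulVec v)
         ((g : Matrix (Fin 2) (Fin 2) ℝ).mulVec w) = B₂ v w) :
    ∃ W : Submodule ℝ (Fin 2 → ℝ), W ≠ ⊥ ∧ W ≠ ⊤ ∧
      ∀ g ∈ G, ∀ v ∈ W, (g : Matrix (Fin 2) (Fin 2) ℝ).mulVec v ∈ W := by
  set S : Set (End ℝ (Fin 2 → ℝ)) :=
    (fun g : GL (Fin 2) ℝ ↦ Matrix.toLin' (g : Matrix (Fin 2) (Fin 2) ℝ)) '' G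
  have hS : ∀ f ∈ S, B₁.IsOrthogonal f ∧ B₂.IsOrthogonal f := by
    rintro _ ⟨g, hg, rfl⟩
    exact ⟨fun v w ↦ by simpa using hinv₁ g hg v w, fun v w ↦ by simpa using hinv₂ g hg v w⟩
  obtain ⟨W, hbot, htop, hW⟩ := actsReducibly_of_isOrthogonal_two_forms
    (finrank_fin_fun ℝ) ⟨hsymm₁⟩ ⟨hsymm₂⟩ (.ofSeparatingLeft hnd₁) hind hS
  exact ⟨W, hbot, htop, fun g hg v hv ↦ by simpa using hW _ ⟨g, hg, rfl⟩ v hv⟩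

/-- **Theorem 2.1 (ii).** If a subgroup `G` of `GL(2, ℝ)` preserves two linearly
independent nondegenerate symmetric bilinear forms on `ℝ²`, then `G` acts
reducibly on `ℝ²`. -/
theorem reducible_of_two_forms_dim_two
    (G : Subgroup (GL (Fin 2) ℝ))
    (B₁ B₂ : LinearMap.BilinForm ℝ (Fin 2 → ℝ))
    (hsymm₁ : ∀ v w, B₁ v w = B₁ w v)
    (hsymm₂ : ∀ v w, B₂ v w = B₂ w v)
    (hnd₁ : ∀ v, (∀ w, B₁ v w = 0) → v = 0)
    (hnd₂ : ∀ v, (∀ w, B₂ v w = 0) → v = 0)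
    (hind : LinearIndependent ℝ ![B₁, B₂])
    (hinv₁ : ∀ g ∈ G, ∀ v w : Fin 2 → ℝ,
      B₁ ((g : Matrix (Fin 2) (Fin 2) ℝ).mulVec v)
         ((g : Matrix (Fin 2) (Fin 2) ℝ).mulVec w) = B₁ v w)
    (hinv₂ : ∀ g ∈ G, ∀ v w : Fin 2 → ℝ,
      B₂ ((g : Matrix (Fin 2) (Fin 2) ℝ).mulVec v)
         ((g : Matrix (Fin 2) (Fin 2) ℝ).mulVec w) = B₂ v w) :
    ∃ W : Submodule ℝ (Fin 2 → ℝ), W ≠ ⊥ ∧ W ≠ ⊤ ∧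
      ∀ g ∈ G, ∀ v ∈ W, (g : Matrix (Fin 2) (Fin 2) ℝ).mulVec v ∈ W :=
  reducible_of_two_forms_dim_two_general G B₁ B₂ hsymm₁ hsymm₂ hnd₁ hind hinv₁ hinv₂
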